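/- arXiv:1712.04553 — 4 statements merged into one kernel-verified Lean document; each statement's English description precedes it below -/
import Mathlib

section
/- For a finite group G, m(G) ≤ MaxDim(G) ≤ i(G), where m(G) is the maximal length of an irredundant generating sequence, MaxDim(G) is the maximal size of a family of maximal subgroups in general position, and i(G) is the maximal length of an irredundant sequence. -/
/-- A sequence `g : Fin n → G` is irredundant if no `g i` lies in the subgroup
generated by the other elements. -/
def Irredundant {G : Type*} [Group G] {n : ℕ} (g : Fin n → G) : Prop :=
  ∀ i, g i ∉ Subgroup.closure (g '' {j | j ≠ i})

/-- Subgroups `H 1, ..., H n` are in general position if for each `i` the intersection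
of the `H j`, `j ≠ i`, strictly contains the intersection of all of them. -/
def GeneralPosition {G : Type*} [Group G] {n : ℕ} (H : Fin n → Subgroup G) : Prop :=
  ∀ i, (⨅ j, H j) < ⨅ j : {j : Fin n // j ≠ i}, H j

/-- `m G`: maximal length of an irredundant generating sequence. -/
noncomputable def mDim (G : Type*) [Group G] : ℕ :=
  sSup {n | ∃ g : Fin n → G, Irredundant g ∧ Subgroup.closure (Set.range g) = ⊤}

/-- `i G`: maximal length of an irredundant sequence. -/
noncomputable def iDim (G : Type*) [Group G] : ℕ :=
  sSup {n | ∃ g : Fin n → G, Irredundant g}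

/-- `MaxDim G`: maximal size of a family of maximal subgroups in general position. -/
noncomputable def MaxDim (G : Type*) [Group G] : ℕ :=
  sSup {n | ∃ H : Fin n → Subgroup G, (∀ i, IsCoatom (H i)) ∧ GeneralPosition H}

/-!
Both inequalities come from one dictionary: elements `x i` and subgroups `H i` such that
`x i ∈ H j` exactly when `j ≠ i`. If the `H i` are in general position, picking `x i` in the
intersection of the `H j` (`j ≠ i`) but not in `H i` gives an irredundant sequence, since `H i`
contains all the other `x j`. Conversely, for an irredundant generating sequence `g`, the
subgroup generated by the `g j` with `j ≠ i` is proper and so lies in a maximal subgroup `M i`;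
`g i ∉ M i` because `g` generates `G`, so the `M i` are in general position. Finiteness of `G`
bounds the length of irredundant sequences (they are injective); this is needed because `sSup`
of an unbounded set of naturals is `0`.
-/

section

variable {G : Type*} [Group G] {n : ℕ}

theorem generalPosition_iff_exists_separating {H : Fin n → Subgroup G} :
    GeneralPosition H ↔ ∃ x : Fin n → G, (∀ i j, j ≠ i → x i ∈ H j) ∧ ∀ i, x i ∉ H i := by
  have mem_iInf_ne {x : G} {i : Fin n} :
      x ∈ (⨅ j : {j : Fin n // j ≠ i}, H j) ↔ ∀ j, j ≠ i → x ∈ H j := by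
    simp only [Subgroup.mem_iInf, Subtype.forall]
  constructor
  · intro hgp
    choose x hx_mem hx_not_mem using fun i => SetLike.exists_of_lt (hgp i)
    refine ⟨x, fun i => mem_iInf_ne.mp (hx_mem i), fun i hi => hx_not_mem i ?_⟩
    refine Subgroup.mem_iInf.mpr fun j => ?_
    obtain rfl | hj := eq_or_ne j i
    exacts [hi, mem_iInf_ne.mp (hx_mem i) j hj]
  · rintro ⟨x, hx_mem, hx_not_mem⟩ i
    refine lt_of_le_of_ne (le_iInf fun j => iInf_le _ j.1) fun heq => hx_not_mem i ?_
    have hx : x i ∈ ⨅ j, H j := heq ▸ mem_iInf_ne.mpr (hx_mem i)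
    exact Subgroup.mem_iInf.mp hx i

theorem irredundant_of_separating {x : Fin n → G} {H : Fin n → Subgroup G}
    (hx_mem : ∀ i j, j ≠ i → x i ∈ H j) (hx_not_mem : ∀ i, x i ∉ H i) : Irredundant x := by
  refine fun i hi => hx_not_mem i ((Subgroup.closure_le (H i)).mpr ?_ hi)
  rintro _ ⟨j, hj, rfl⟩
  exact hx_mem j i (Ne.symm hj)

theorem GeneralPosition.exists_irredundant {H : Fin n → Subgroup G} (hH : GeneralPosition H) :
    ∃ x : Fin n → G, Irredundant x := by
  obtain ⟨x, hx_mem, hx_not_mem⟩ := generalPosition_iff_exists_separating.mp hH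
  exact ⟨x, irredundant_of_separating hx_mem hx_not_mem⟩

theorem Irredundant.exists_coatom_generalPosition [IsCoatomic (Subgroup G)] {g : Fin n → G}
    (hg : Irredundant g) (hgen : Subgroup.closure (Set.range g) = ⊤) :
    ∃ M : Fin n → Subgroup G, (∀ i, IsCoatom (M i)) ∧ GeneralPosition M := by
  have hproper i : Subgroup.closure (g '' {j | j ≠ i}) ≠ ⊤ :=
    fun h => hg i (h ▸ Subgroup.mem_top (g i))
  choose M hM_coatom hle_M using fun i =>
    (eq_top_or_exists_le_coatom (Subgroup.closure (g '' {j | j ≠ i}))).resolve_left (hproper i)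
  have hg_mem i j (hji : j ≠ i) : g i ∈ M j :=
    hle_M j (Subgroup.subset_closure ⟨i, hji.symm, rfl⟩)
  have hg_not_mem i : g i ∉ M i := by
    intro hi
    refine (hM_coatom i).1 (top_le_iff.mp (hgen ▸ (Subgroup.closure_le (M i)).mpr ?_))
    rintro _ ⟨j, rfl⟩
    obtain rfl | hj := eq_or_ne j i
    exacts [hi, hg_mem j i (Ne.symm hj)]
  exact ⟨M, hM_coatom, generalPosition_iff_exists_separating.mpr ⟨g, hg_mem, hg_not_mem⟩⟩

theorem Irredundant.injective {g : Fin n → G} (hg : Irredundant g) : Function.Injective g :=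
  fun i j hij => by_contra fun h => hg j (Subgroup.subset_closure ⟨i, h, hij⟩)

theorem bddAbove_irredundant_lengths [Finite G] :
    BddAbove {n | ∃ g : Fin n → G, Irredundant g} :=
  ⟨Nat.card G, fun n ⟨g, hg⟩ => by simpa using Nat.card_le_card_of_injective g hg.injective⟩

end

/-- For a finite group `G`, `m(G) ≤ MaxDim(G) ≤ i(G)`. -/
theorem mDim_le_maxDim_le_iDim (G : Type*) [Group G] [Finite G] :
    mDim G ≤ MaxDim G ∧ MaxDim G ≤ iDim G := by
  have h_maxDim : {n | ∃ H : Fin n → Subgroup G, (∀ i, IsCoatom (H i)) ∧ GeneralPosition H}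
      ⊆ {n | ∃ g : Fin n → G, Irredundant g} :=
    fun _ ⟨_, _, hH⟩ => hH.exists_irredundant
  have h_mDim : {n | ∃ g : Fin n → G, Irredundant g ∧ Subgroup.closure (Set.range g) = ⊤}
      ⊆ {n | ∃ H : Fin n → Subgroup G, (∀ i, IsCoatom (H i)) ∧ GeneralPosition H} :=
    fun _ ⟨_, hg, hgen⟩ => hg.exists_coatom_generalPosition hgen
  exact ⟨csSup_le_csSup' (bddAbove_irredundant_lengths.mono h_maxDim) h_mDim,
    csSup_le_csSup' bddAbove_irredundant_lengths h_maxDim⟩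
end

section
/- If g_1,...,g_n is an irredundant generating sequence of a finite group G, and for each i we choose a maximal subgroup M_i containing the subgroup generated by {g_j : j ≠ i}, then the subgroups M_1,...,M_n are in general position. -/
theorem GeneralPosition.of_exists_mem_of_notMem {G : Type*} [Group G] {n : ℕ}
    {H : Fin n → Subgroup G} (h : ∀ i, ∃ x, x ∉ H i ∧ ∀ j ≠ i, x ∈ H j) :
    GeneralPosition H := by
  intro i
  obtain ⟨x, hxi, hxj⟩ := h i
  refine lt_of_le_of_ne (le_iInf fun j => iInf_le _ j.1) fun heq => hxi ?_
  have hx : x ∈ ⨅ j : {j : Fin n // j ≠ i}, H j := Subgroup.mem_iInf.2 fun j => hxj j.1 j.2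
  exact Subgroup.mem_iInf.1 (heq ▸ hx) i

theorem Subgroup.apply_notMem_of_closure_range_eq_top {G ι : Type*} [Group G] {g : ι → G}
    (hgen : Subgroup.closure (Set.range g) = ⊤) {K : Subgroup G} (hK : K ≠ ⊤) {i : ι}
    (hle : Subgroup.closure (g '' {j | j ≠ i}) ≤ K) : g i ∉ K := by
  intro hi
  refine hK (top_le_iff.1 (hgen ▸ (Subgroup.closure_le K).2 ?_))
  rintro _ ⟨j, rfl⟩
  by_cases hji : j = i
  · exact hji ▸ hi
  · exact hle (Subgroup.subset_closure ⟨j, hji, rfl⟩)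

theorem maximal_overgroups_generalPosition_general {G : Type*} [Group G] {n : ℕ}
    (g : Fin n → G)
    (hgen : Subgroup.closure (Set.range g) = ⊤)
    (M : Fin n → Subgroup G) (hmax : ∀ i, IsCoatom (M i))
    (hM : ∀ i, Subgroup.closure (g '' {j | j ≠ i}) ≤ M i) :
    GeneralPosition M :=
  GeneralPosition.of_exists_mem_of_notMem fun i =>
    ⟨g i, Subgroup.apply_notMem_of_closure_range_eq_top hgen (hmax i).1 (hM i),
      fun j hji => hM j (Subgroup.subset_closure ⟨i, hji.symm, rfl⟩)⟩

/-- If `g` is an irredundant generating sequence and each `M i` is a maximal subgroup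
containing `⟨g j : j ≠ i⟩`, then the `M i` are in general position. -/
theorem maximal_overgroups_generalPosition {G : Type*} [Group G] [Finite G] {n : ℕ}
    (g : Fin n → G) (hirr : Irredundant g)
    (hgen : Subgroup.closure (Set.range g) = ⊤)
    (M : Fin n → Subgroup G) (hmax : ∀ i, IsCoatom (M i))
    (hM : ∀ i, Subgroup.closure (g '' {j | j ≠ i}) ≤ M i) :
    GeneralPosition M :=
  maximal_overgroups_generalPosition_general g hgen M hmax hM
end

section
/- Let S be a finite simple group and let F = C_n ⋊ B and G = C_m ⋊ B' be two distinct maximal subgroups of S, where C_n and C_m are cyclic of orders n and m, with gcd(|B|, m) = 1 and gcd(|B'|, n) = 1. Then the intersection F ∩ G embeds as a subgroup into both B and B'. -/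
open Subgroup

/-- In a finite cyclic group, subgroups of equal cardinality are equal. -/
private lemma aux_cyclic_eq {α : Type*} [Group α] [Fintype α] [IsCyclic α]
    {H K : Subgroup α} (h : Nat.card H = Nat.card K) : H = K := by
  classical
  set d := Nat.card H with hd
  have hd0 : 0 < d := Nat.card_pos
  have key : ∀ L : Subgroup α, Nat.card L = d →
      (L : Set α).toFinset = Finset.univ.filter (fun a : α => a ^ d = 1) := by
    intro L hL
    apply Finset.eq_of_subset_of_card_le
    · intro x hx
      simp only [Set.mem_toFinset, SetLike.mem_coe] at hx
      simp only [Finset.mem_filter, Finset.mem_univ, true_and]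
      have : orderOf x ∣ d := hL ▸ L.orderOf_dvd_natCard hx
      exact orderOf_dvd_iff_pow_eq_one.mp this
    · have h1 : (Finset.univ.filter (fun a : α => a ^ d = 1)).card ≤ d := by
        simpa using IsCyclic.card_pow_eq_one_le (α := α) hd0
      have h2 : (L : Set α).toFinset.card = d := by
        rw [Set.toFinset_card, ← Nat.card_eq_fintype_card]
        exact hL
      omega
  have hH := key H rfl
  have hK := key K h.symm
  ext x
  have := hH.trans hK.symm
  constructor <;> intro hx
  · have : x ∈ (H : Set α).toFinset := by simpa using hx
    rw [hH, ← hK] at this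
    simpa using this
  · have : x ∈ (K : Set α).toFinset := by simpa using hx
    rw [hK, ← hH] at this
    simpa using this

private lemma aux_normal {S : Type*} [Group S] (G C : Subgroup S)
    (h : ∀ g ∈ G, ∀ x ∈ C, g * x * g⁻¹ ∈ C) : (C.subgroupOf G).Normal := by
  constructor
  intro n hn g
  rw [Subgroup.mem_subgroupOf] at hn ⊢
  simpa using h g g.2 n hn

/-- The projection of the complement onto the quotient by the normal part is bijective. -/
private lemma aux_bij {S : Type*} [Group S] (G C B : Subgroup S)
    [(C.subgroupOf G).Normal]
    (hCG : C ≤ G) (hBG : B ≤ G) (hint : C ⊓ B = ⊥) (hjoin : C ⊔ B = G) :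
    Function.Bijective
      ((QuotientGroup.mk' (C.subgroupOf G)).domRestrict (B.subgroupOf G)) := by
  constructor
  · rw [injective_iff_map_eq_one]
    intro a ha
    have h1 : ((a : G) : G ⧸ C.subgroupOf G) = 1 := ha
    rw [QuotientGroup.eq_one_iff] at h1
    rw [Subgroup.mem_subgroupOf] at h1
    have h2 : ((a : G) : S) ∈ B := (Subgroup.mem_subgroupOf).mp a.2
    have : ((a : G) : S) ∈ C ⊓ B := ⟨h1, h2⟩
    rw [hint, Subgroup.mem_bot] at this
    ext
    exact this
  · intro q
    obtain ⟨g, rfl⟩ := QuotientGroup.mk'_surjective (C.subgroupOf G) q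
    have hg : g ∈ C.subgroupOf G ⊔ B.subgroupOf G := by
      rw [← Subgroup.subgroupOf_sup hCG hBG, hjoin, Subgroup.subgroupOf_self]
      trivial
    have hg' : (g : G) ∈ ((C.subgroupOf G ⊔ B.subgroupOf G : Subgroup G) : Set G) := hg
    rw [Subgroup.normal_mul] at hg'
    obtain ⟨c, hc, b, hb, hcb⟩ := hg'
    refine ⟨⟨b, hb⟩, ?_⟩
    have hcb' : c * b = g := hcb
    have hc' : c ∈ C.subgroupOf G := hc
    show QuotientGroup.mk b = QuotientGroup.mk g
    rw [← hcb', QuotientGroup.mk_mul, (QuotientGroup.eq_one_iff c).mpr hc', one_mul]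

/-- If `C ⊓ G = ⊥`, then `F ⊓ G` embeds into the complement `B` of `C` in `F`. -/
private lemma aux_embed {S : Type*} [Group S] (F G C B : Subgroup S)
    (hCF : C ≤ F) (hBF : B ≤ F)
    (hNormal : ∀ f ∈ F, ∀ x ∈ C, f * x * f⁻¹ ∈ C)
    (hint : C ⊓ B = ⊥) (hjoin : C ⊔ B = F)
    (hCG : C ⊓ G = ⊥) :
    ∃ φ : (F ⊓ G : Subgroup S) →* B, Function.Injective φ := by
  haveI := aux_normal F C hNormal
  have hbij := aux_bij F C B hCF hBF hint hjoin
  let e : (B.subgroupOf F) ≃* F ⧸ C.subgroupOf F := MulEquiv.ofBijective _ hbij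
  let incl : (F ⊓ G : Subgroup S) →* F := Subgroup.inclusion inf_le_left
  let π : F →* F ⧸ C.subgroupOf F := QuotientGroup.mk' (C.subgroupOf F)
  refine ⟨((Subgroup.subgroupOfEquivOfLe hBF).toMonoidHom.comp
      e.symm.toMonoidHom).comp (π.comp incl), ?_⟩
  have hinj1 : Function.Injective (π.comp incl) := by
    rw [injective_iff_map_eq_one]
    intro a ha
    have h1 : ((incl a : F) : F ⧸ C.subgroupOf F) = 1 := ha
    rw [QuotientGroup.eq_one_iff, Subgroup.mem_subgroupOf] at h1
    have h2 : (a : S) ∈ G := a.2.2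
    have : (a : S) ∈ C ⊓ G := ⟨h1, h2⟩
    rw [hCG, Subgroup.mem_bot] at this
    ext
    exact this
  exact ((Subgroup.subgroupOfEquivOfLe hBF).injective.comp e.symm.injective).comp hinj1

/-- Coprimality: any subgroup `D` of order coprime to the complement `B` meets `G`
inside the normal part `C`. -/
private lemma aux_inf_le {S : Type*} [Group S] [Finite S] (G C B D : Subgroup S)
    (hCG : C ≤ G) (hBG : B ≤ G)
    (hNormal : ∀ g ∈ G, ∀ x ∈ C, g * x * g⁻¹ ∈ C)
    (hint : C ⊓ B = ⊥) (hjoin : C ⊔ B = G)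
    (hcop : Nat.Coprime (Nat.card B) (Nat.card D)) :
    D ⊓ G ≤ C := by
  haveI := aux_normal G C hNormal
  have hbij := aux_bij G C B hCG hBG hint hjoin
  have hcard : Nat.card (G ⧸ C.subgroupOf G) = Nat.card B := by
    have e1 : (B.subgroupOf G) ≃* G ⧸ C.subgroupOf G := MulEquiv.ofBijective _ hbij
    have e2 : (B.subgroupOf G) ≃* B := Subgroup.subgroupOfEquivOfLe hBG
    rw [← Nat.card_congr e1.toEquiv, Nat.card_congr e2.toEquiv]
  intro x hx
  obtain ⟨hxD, hxG⟩ := hx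
  set g : G := ⟨x, hxG⟩
  set q : G ⧸ C.subgroupOf G := QuotientGroup.mk' (C.subgroupOf G) g
  have h1 : orderOf q ∣ Nat.card D := by
    refine dvd_trans (orderOf_map_dvd _ g) ?_
    rw [Subgroup.orderOf_mk]
    exact D.orderOf_dvd_natCard hxD
  have h2 : orderOf q ∣ Nat.card B := hcard ▸ orderOf_dvd_natCard q
  have hdvd : orderOf q ∣ 1 := hcop ▸ Nat.dvd_gcd h2 h1
  have hq1 : q = 1 := orderOf_eq_one_iff.mp (Nat.dvd_one.mp hdvd)
  have : g ∈ C.subgroupOf G := (QuotientGroup.eq_one_iff g).mp hq1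
  exact (Subgroup.mem_subgroupOf).mp this

/-- A subgroup of the cyclic normal part `C` of `F` is normalized by all of `F`. -/
private lemma aux_norm {S : Type*} [Group S] [Finite S] (F C : Subgroup S)
    (hC : IsCyclic C)
    (hNormal : ∀ f ∈ F, ∀ x ∈ C, f * x * f⁻¹ ∈ C)
    (E : Subgroup S) (hE : E ≤ C) :
    F ≤ normalizer (E : Set S) := by
  intro f hf
  rw [Subgroup.mem_normalizer_iff]
  set c : S →* S := (MulAut.conj f).toMonoidHom
  set K : Subgroup S := E.map c with hK
  have hKC : K ≤ C := by
    rintro y ⟨x, hx, rfl⟩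
    exact hNormal f hf x (hE hx)
  have hcard : Nat.card E = Nat.card K :=
    Nat.card_congr (Subgroup.equivMapOfInjective E c (MulAut.conj f).injective).toEquiv
  have hEK : E = K := by
    haveI : Fintype C := Fintype.ofFinite C
    have hcard' : Nat.card (E.subgroupOf C) = Nat.card (K.subgroupOf C) := by
      rw [Nat.card_congr (Subgroup.subgroupOfEquivOfLe hE).toEquiv,
        Nat.card_congr (Subgroup.subgroupOfEquivOfLe hKC).toEquiv]
      exact hcard
    have heq : E.subgroupOf C = K.subgroupOf C := aux_cyclic_eq hcard'
    ext x
    constructor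
    · intro hx
      have : (⟨x, hE hx⟩ : C) ∈ E.subgroupOf C := hx
      rw [heq] at this
      exact this
    · intro hx
      have : (⟨x, hKC hx⟩ : C) ∈ K.subgroupOf C := hx
      rw [← heq] at this
      exact this
  intro h
  constructor
  · intro hh
    rw [hEK]
    exact ⟨h, hh, rfl⟩
  · intro hh
    rw [hEK] at hh
    obtain ⟨x, hx, hxe⟩ := hh
    have : c x = c h := hxe.trans rfl
    have hxh : x = h := (MulAut.conj f).injective this
    exact hxh ▸ hx

/-- If `F = C_n ⋊ B` and `G = C_m ⋊ B'` are distinct maximal subgroups of a finite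
nonabelian simple group `S`, with `gcd(|B|, m) = 1 = gcd(|B'|, n)`, then `F ∩ G`
embeds into both `B` and `B'`. -/
theorem intersection_embeds_into_complements
    {S : Type*} [Group S] [Finite S] [IsSimpleGroup S]
    (hnab : ¬ ∀ a b : S, a * b = b * a)
    (F G Cn Cm B B' : Subgroup S) (n m : ℕ)
    (hF : IsCoatom F) (hG : IsCoatom G) (hFG : F ≠ G)
    (hCn : IsCyclic Cn) (hCm : IsCyclic Cm)
    (hCnF : Cn ≤ F) (hBF : B ≤ F)
    (hCnNormal : ∀ f ∈ F, ∀ x ∈ Cn, f * x * f⁻¹ ∈ Cn)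
    (hFint : Cn ⊓ B = ⊥) (hFjoin : Cn ⊔ B = F)
    (hCmG : Cm ≤ G) (hB'G : B' ≤ G)
    (hCmNormal : ∀ g ∈ G, ∀ x ∈ Cm, g * x * g⁻¹ ∈ Cm)
    (hGint : Cm ⊓ B' = ⊥) (hGjoin : Cm ⊔ B' = G)
    (hn : Nat.card Cn = n) (hm : Nat.card Cm = m)
    (hcop : Nat.Coprime (Nat.card B) m) (hcop' : Nat.Coprime (Nat.card B') n) :
    (∃ φ : (F ⊓ G : Subgroup S) →* B, Function.Injective φ) ∧
    (∃ ψ : (F ⊓ G : Subgroup S) →* B', Function.Injective ψ) := by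
  -- `F ⊔ G = ⊤` since `F, G` are distinct maximal subgroups
  have hGnF : ¬ G ≤ F := by
    intro h
    exact hF.1 (hG.2 F (lt_of_le_of_ne h (Ne.symm hFG)))
  have htop : F ⊔ G = ⊤ := by
    refine hF.2 (F ⊔ G) (lt_of_le_of_ne le_sup_left ?_)
    intro h
    exact hGnF (h ▸ le_sup_right)
  -- `Cn ⊓ Cm` is normal in `S`, hence trivial
  have hnorm1 : F ≤ normalizer ((Cn ⊓ Cm : Subgroup S) : Set S) :=
    aux_norm F Cn hCn hCnNormal _ inf_le_left
  have hnorm2 : G ≤ normalizer ((Cn ⊓ Cm : Subgroup S) : Set S) :=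
    aux_norm G Cm hCm hCmNormal _ inf_le_right
  have hnormtop : normalizer ((Cn ⊓ Cm : Subgroup S) : Set S) = ⊤ := by
    rw [eq_top_iff, ← htop]
    exact sup_le hnorm1 hnorm2
  haveI hNrm : (Cn ⊓ Cm).Normal := Subgroup.normalizer_eq_top_iff.mp hnormtop
  have hbot : Cn ⊓ Cm = ⊥ := by
    rcases hNrm.eq_bot_or_eq_top with h | h
    · exact h
    · exfalso
      apply hF.1
      rw [eq_top_iff, ← h]
      exact le_trans inf_le_left hCnF
  -- coprimality forces `Cn ⊓ G ≤ Cm` and `Cm ⊓ F ≤ Cn`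
  have hCnG : Cn ⊓ G = ⊥ := by
    rw [← hbot]
    refine le_antisymm (le_inf inf_le_left ?_) (le_trans hbot.le bot_le)
    exact aux_inf_le G Cm B' Cn hCmG hB'G hCmNormal hGint hGjoin (hn ▸ hcop')
  have hCmF : Cm ⊓ F = ⊥ := by
    rw [← hbot]
    refine le_antisymm (le_inf ?_ inf_le_left) (le_trans hbot.le bot_le)
    exact aux_inf_le F Cn B Cm hCnF hBF hCnNormal hFint hFjoin (hm ▸ hcop)
  constructor
  · exact aux_embed F G Cn B hCnF hBF hCnNormal hFint hFjoin hCnG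
  · obtain ⟨φ, hφ⟩ := aux_embed G F Cm B' hCmG hB'G hCmNormal hGint hGjoin hCmF
    have hcomm : F ⊓ G = G ⊓ F := inf_comm F G
    exact ⟨φ.comp (MulEquiv.subgroupCongr hcomm).toMonoidHom,
      hφ.comp (MulEquiv.subgroupCongr hcomm).injective⟩
end

section
/- Suppose a group G acts on a set X such that every nontrivial element fixes at most 2 points, and let a, u, v be pairwise distinct points. Then the subgroup Stab_G(a) ∩ Stab_G({u,v}) (point stabilizer of a intersected with the setwise stabilizer of {u,v}) has order at most 2. -/
open Pointwise

/-! An element of the subgroup that fixes `u` also fixes `v`, so it fixes the three distinct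
points `a, u, v` and is trivial. Hence the subgroup acts freely on the orbit of `u`, which lies
in `{u, v}`. -/

namespace MulAction

variable {G X : Type*} [Group G] [MulAction G X]

theorem card_eq_ncard_orbit_of_stabilizer_eq_bot {x : X} (hx : stabilizer G x = ⊥) :
    Nat.card G = (orbit G x).ncard := by
  rw [← Subgroup.index_bot, ← hx, index_stabilizer]

theorem smul_mem_pair_of_mem_stabilizer {g : G} {u v : X}
    (hg : g ∈ stabilizer G ({u, v} : Set X)) : g • u = u ∨ g • u = v :=
  (mem_stabilizer_set.mp hg u).mpr (Set.mem_insert u {v})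

theorem smul_eq_of_mem_stabilizer_pair_of_smul_eq {g : G} {u v : X} (huv : u ≠ v)
    (hg : g ∈ stabilizer G ({u, v} : Set X)) (hu : g • u = u) : g • v = v := by
  have hv : g • v ∈ ({u, v} : Set X) := (mem_stabilizer_set.mp hg v).mpr (by simp)
  rcases hv with hv | hv
  · exact absurd (smul_left_cancel g (hu.trans hv.symm)) huv
  · exact hv

end MulAction

open MulAction

/-- If every nontrivial element of `G` fixes at most 2 points of `X`, and `a, u, v` are
pairwise distinct, then `Stab(a) ∩ Stab({u,v})` has order at most 2. -/
theorem stabilizer_inter_setwise_card_le_two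
    {G X : Type*} [Group G] [MulAction G X]
    (hfix : ∀ g : G, g ≠ 1 → ∀ x y z : X, g • x = x → g • y = y → g • z = z →
      x = y ∨ x = z ∨ y = z)
    (a u v : X) (hau : a ≠ u) (hav : a ≠ v) (huv : u ≠ v) :
    Nat.card (MulAction.stabilizer G a ⊓ MulAction.stabilizer G ({u, v} : Set X) :
      Subgroup G) ≤ 2 := by
  set I := stabilizer G a ⊓ stabilizer G ({u, v} : Set X)
  have hfree : stabilizer I u = ⊥ := by
    refine (Subgroup.eq_bot_iff_forall _).mpr fun ⟨g, ha, hs⟩ hu => Subtype.ext ?_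
    by_contra hg
    have hv := smul_eq_of_mem_stabilizer_pair_of_smul_eq huv hs hu
    rcases hfix g hg a u v ha hu hv with h | h | h
    exacts [hau h, hav h, huv h]
  have horbit : orbit I u ⊆ {u, v} := by
    rintro _ ⟨g, rfl⟩
    exact smul_mem_pair_of_mem_stabilizer g.2.2
  calc Nat.card I = (orbit I u).ncard := card_eq_ncard_orbit_of_stabilizer_eq_bot hfree
    _ ≤ ({u, v} : Set X).ncard := Set.ncard_le_ncard horbit (Set.toFinite _)
    _ = 2 := Set.ncard_pair huv
end
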